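/- (Generalized Pinsker inequality.) For any order α ∈ (0,1] and any probability measures P, Q on a measurable space dominated by a common σ-finite measure μ, (α/2)·V(P,Q)² ≤ D_α(P‖Q), where V(P,Q) = ∫ |p − q| dμ is the total variation distance. -/

import Mathlib

open MeasureTheory Real Filter Set
open scoped ENNReal NNReal Topology Classical

/-- The Hellinger integral `∫ p^α q^(1-α) dμ`, computed with the dominating
measure `μ = P + Q` (the value does not depend on the choice of dominating
measure). The `ℝ≥0∞`-valued `rpow` automatically implements the conventions
`0/0 = 0` and `x/0 = ∞` for `x > 0` when `α > 1`. -/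
noncomputable def hellingerInt {X : Type*} [MeasurableSpace X]
    (α : ℝ) (P Q : Measure X) : ℝ≥0∞ :=
  ∫⁻ x, P.rnDeriv (P + Q) x ^ α * Q.rnDeriv (P + Q) x ^ (1 - α) ∂(P + Q)

/-- Rényi divergence of a simple order `α ∈ (0,1) ∪ (1,∞)`:
`D_α(P‖Q) = (α-1)⁻¹ log ∫ p^α q^(1-α) dμ`. -/
noncomputable def renyiSimple {X : Type*} [MeasurableSpace X]
    (α : ℝ) (P Q : Measure X) : EReal :=
  (((α - 1)⁻¹ : ℝ) : EReal) * ENNReal.log (hellingerInt α P Q)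

/-- Rényi divergence of any order `α ∈ [0,∞]`.  The extended orders `0`, `1`, `∞`
are defined as the limits of the simple orders (the limits exist by monotonicity
in the order, so they coincide with the `limsup`s used here). -/
noncomputable def renyiDiv {X : Type*} [MeasurableSpace X]
    (α : ℝ≥0∞) (P Q : Measure X) : EReal :=
  if α = 0 then Filter.limsup (fun a : ℝ => renyiSimple a P Q) (nhdsWithin (0:ℝ) (Set.Ioi 0))
  else if α = 1 then Filter.limsup (fun a : ℝ => renyiSimple a P Q) (nhdsWithin (1:ℝ) (Set.Iio 1))
  else if α = ∞ then Filter.limsup (fun a : ℝ => renyiSimple a P Q) Filter.atTop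
  else renyiSimple α.toReal P Q

/-- Kullback-Leibler divergence `D(P‖Q) = ∫ p log (p/q) dμ`, with the conventions
`0 log (0/q) = 0` and `p log (p/0) = ∞` for `p > 0`; in particular `D(P‖Q) = ∞`
whenever `P` is not absolutely continuous w.r.t. `Q`, or the integral diverges. -/
noncomputable def klDiv {X : Type*} [MeasurableSpace X] (P Q : Measure X) : EReal :=
  if P ≪ Q ∧ Integrable (llr P Q) P then ((∫ x, llr P Q x ∂P : ℝ) : EReal) else ⊤

/-! For `α < 1`, put `a = (4 - 2α)/3` and `b = (2 + 2α)/3`, so that `a + b = 2`. The elementary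
inequality `α (1 - α) (x - y)² ≤ (a x + b y) (α x + (1 - α) y - x^α y^(1-α))` and
Cauchy–Schwarz give `α (1 - α) V² ≤ ∫ (a p + b q) dμ · (1 - H) = 2 (1 - H)` for the Hellinger
integral `H = ∫ p^α q^(1-α) dμ`, and `1 - H ≤ -log H = (1 - α) D_α(P‖Q)`. The order `α = 1`
follows by letting `α ↑ 1`.

By homogeneity the elementary inequality reduces to `y = 1`. There, after division by `a t + b`,
the difference of its two sides is a convex function of `t` with a double zero at `t = 1`: its
second derivative is nonnegative by the weighted AM-GM inequality `t^((2-α)/3) ≤ (a t + b)/2`. -/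

lemma isMinOn_of_hasDerivAt_eq_zero_of_deriv2_nonneg {D : Set ℝ} (hD : Convex ℝ D)
    {f f' f'' : ℝ → ℝ} {c : ℝ} (hf : ContinuousOn f D)
    (hf' : ∀ x ∈ interior D, HasDerivAt f (f' x) x)
    (hf'' : ∀ x ∈ interior D, HasDerivAt f' (f'' x) x) (hf''₀ : ∀ x ∈ interior D, 0 ≤ f'' x)
    (hc : c ∈ interior D) (hc' : f' c = 0) : IsMinOn f D c := by
  have hconv : ConvexOn ℝ D f := convexOn_of_hasDerivWithinAt2_nonneg hD hf
    (fun x hx ↦ (hf' x hx).hasDerivWithinAt) (fun x hx ↦ (hf'' x hx).hasDerivWithinAt) hf''₀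
  refine hconv.isMinOn_of_rightDeriv_eq_zero hc ?_
  rw [(hf' c hc).hasDerivWithinAt.derivWithin (uniqueDiffWithinAt_Ioi c), hc']

lemma Real.eight_mul_rpow_two_sub_le_cube {α t : ℝ} (hα0 : 0 < α) (hα1 : α < 1) (ht : 0 ≤ t) :
    8 * t ^ (2 - α) ≤ ((4 - 2 * α) / 3 * t + (2 + 2 * α) / 3) ^ 3 := by
  have hamgm : t ^ ((2 - α) / 3) ≤ (2 - α) / 3 * t + (1 + α) / 3 := by
    simpa using Real.geom_mean_le_arith_mean2_weighted (p₂ := 1) (by linarith) (by linarith)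
      ht zero_le_one (by ring)
  calc 8 * t ^ (2 - α) = 8 * (t ^ ((2 - α) / 3)) ^ 3 := by
        rw [← Real.rpow_natCast, ← Real.rpow_mul ht]; norm_num
    _ ≤ 8 * ((2 - α) / 3 * t + (1 + α) / 3) ^ 3 := by gcongr
    _ = _ := by ring

section PinskerGap

variable (α a b : ℝ)

/-- With `s = a t + b` and `a + b = 2`, we have `s + 4 / s - 4 = a ^ 2 (t - 1) ^ 2 / s`, so up to
an additive constant this is `a ^ 2` times `(α t + 1 - α - t ^ α) - α (1 - α) (t - 1) ^ 2 / s`. -/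
noncomputable def pinskerGap (t : ℝ) : ℝ :=
  a ^ 2 * (α * t - t ^ α) - α * (1 - α) * (a * t + b + 4 / (a * t + b))

noncomputable def pinskerGapDeriv (t : ℝ) : ℝ :=
  a ^ 2 * (α - α * t ^ (α - 1)) - α * (1 - α) * (a - 4 * a / (a * t + b) ^ 2)

variable {α a b}

lemma hasDerivAt_pinskerGap {t : ℝ} (ht : 0 < t) (hne : a * t + b ≠ 0) :
    HasDerivAt (pinskerGap α a b) (pinskerGapDeriv α a b t) t := by
  have hlin : HasDerivAt (fun s ↦ a * s + b) a t := by
    simpa using ((hasDerivAt_id t).const_mul a).add_const b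
  have := ((((hasDerivAt_id' t).const_mul α).fun_sub
    (Real.hasDerivAt_rpow_const (p := α) (Or.inl ht.ne'))).const_mul (a ^ 2)).fun_sub
    ((hlin.fun_add ((hasDerivAt_const t 4).fun_div hlin hne)).const_mul (α * (1 - α)))
  exact this.congr_deriv (by rw [pinskerGapDeriv]; field_simp; ring)

lemma hasDerivAt_pinskerGapDeriv {t : ℝ} (ht : 0 < t) (hne : a * t + b ≠ 0) :
    HasDerivAt (pinskerGapDeriv α a b)
      (a ^ 2 * (α * (1 - α)) * (t ^ (α - 2) - 8 / (a * t + b) ^ 3)) t := by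
  have hlin : HasDerivAt (fun s ↦ a * s + b) a t := by
    simpa using ((hasDerivAt_id t).const_mul a).add_const b
  have := (((hasDerivAt_const t α).fun_sub
    ((Real.hasDerivAt_rpow_const (p := α - 1) (Or.inl ht.ne')).const_mul α)).const_mul
    (a ^ 2)).fun_sub (((hasDerivAt_const t a).fun_sub
    ((hasDerivAt_const t (4 * a)).fun_div (hlin.fun_pow 2) (pow_ne_zero 2 hne))).const_mul
    (α * (1 - α)))
  refine this.congr_deriv ?_
  rw [show α - 1 - 1 = α - 2 by ring]
  field_simp
  ring

lemma isMinOn_pinskerGap (hα0 : 0 < α) (hα1 : α < 1) :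
    IsMinOn (pinskerGap α ((4 - 2 * α) / 3) ((2 + 2 * α) / 3)) (Ici 0) 1 := by
  set a := (4 - 2 * α) / 3 with ha
  set b := (2 + 2 * α) / 3 with hb
  have hpos : ∀ s, 0 ≤ s → 0 < a * s + b := fun s hs ↦ by
    have : 0 ≤ a * s := mul_nonneg (by linarith) hs
    linarith
  have hconvex : ∀ s ∈ interior (Ici (0 : ℝ)),
      0 ≤ a ^ 2 * (α * (1 - α)) * (s ^ (α - 2) - 8 / (a * s + b) ^ 3) := by
    rw [interior_Ici]
    intro s hs
    have hcube : 8 * s ^ (2 - α) ≤ (a * s + b) ^ 3 :=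
      Real.eight_mul_rpow_two_sub_le_cube hα0 hα1 hs.le
    have h8 : 8 / (a * s + b) ^ 3 ≤ s ^ (α - 2) := by
      rw [div_le_iff₀ (pow_pos (hpos s hs.le) 3), show α - 2 = -(2 - α) by ring,
        Real.rpow_neg hs.le, inv_mul_eq_div, le_div_iff₀ (Real.rpow_pos_of_pos hs _)]
      linarith
    have hα : 0 < α * (1 - α) := mul_pos hα0 (by linarith)
    have hdiff : 0 ≤ s ^ (α - 2) - 8 / (a * s + b) ^ 3 := by linarith
    positivity
  have hcont : ContinuousOn (pinskerGap α a b) (Ici 0) := by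
    have hrpow := Real.continuous_rpow_const hα0.le
    unfold pinskerGap
    fun_prop (disch := exact fun s hs ↦ (hpos s hs).ne')
  have hint : ∀ s ∈ interior (Ici (0 : ℝ)), 0 < s := by simp
  have hab : a + b = 2 := by rw [ha, hb]; ring
  exact isMinOn_of_hasDerivAt_eq_zero_of_deriv2_nonneg (convex_Ici 0) hcont
    (fun s hs ↦ hasDerivAt_pinskerGap (hint s hs) (hpos s (hint s hs).le).ne')
    (fun s hs ↦ hasDerivAt_pinskerGapDeriv (hint s hs) (hpos s (hint s hs).le).ne') hconvex
    (by simp) (by simp only [pinskerGapDeriv, Real.one_rpow, mul_one, hab]; ring)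

end PinskerGap

lemma Real.mul_sq_sub_one_le_mul_sub_rpow {α t : ℝ} (hα0 : 0 < α) (hα1 : α < 1) (ht : 0 ≤ t) :
    α * (1 - α) * (t - 1) ^ 2 ≤
      ((4 - 2 * α) / 3 * t + (2 + 2 * α) / 3) * (α * t + (1 - α) - t ^ α) := by
  set a := (4 - 2 * α) / 3 with ha
  set b := (2 + 2 * α) / 3 with hb
  have hs : 0 < a * t + b := by
    have : 0 ≤ a * t := mul_nonneg (by linarith) ht
    linarith
  have hmin : pinskerGap α a b 1 ≤ pinskerGap α a b t := isMinOn_pinskerGap hα0 hα1 ht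
  have key : (a * t + b) * (pinskerGap α a b t - pinskerGap α a b 1) =
      a ^ 2 * ((a * t + b) * (α * t + (1 - α) - t ^ α) - α * (1 - α) * (t - 1) ^ 2) := by
    simp only [pinskerGap, Real.one_rpow, mul_one]
    field_simp
    rw [ha, hb]
    ring
  have hprod : 0 ≤ a ^ 2 * _ := key ▸ mul_nonneg hs.le (sub_nonneg.2 hmin)
  exact sub_nonneg.1 (nonneg_of_mul_nonneg_right hprod (pow_pos (by rw [ha]; linarith) 2))

lemma Real.mul_sq_sub_le_mul_sub_rpow_mul_rpow {α x y : ℝ} (hα0 : 0 < α) (hα1 : α < 1)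
    (hx : 0 ≤ x) (hy : 0 ≤ y) :
    α * (1 - α) * (x - y) ^ 2 ≤
      ((4 - 2 * α) / 3 * x + (2 + 2 * α) / 3 * y) *
        (α * x + (1 - α) * y - x ^ α * y ^ (1 - α)) := by
  rcases hy.eq_or_lt with rfl | hy
  · rw [Real.zero_rpow (by linarith)]
    have : 0 ≤ α * x ^ 2 * (1 - α) := by positivity
    nlinarith
  have hy0 := hy.ne'
  have hhom : x ^ α * y ^ (1 - α) = y * (x / y) ^ α := by
    rw [Real.div_rpow hx hy.le, Real.rpow_sub hy, Real.rpow_one]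
    field_simp
  have hscaled := mul_le_mul_of_nonneg_left (Real.mul_sq_sub_one_le_mul_sub_rpow hα0 hα1
    (div_nonneg hx hy.le)) (sq_nonneg y)
  calc α * (1 - α) * (x - y) ^ 2 = y ^ 2 * (α * (1 - α) * (x / y - 1) ^ 2) := by field_simp
    _ ≤ _ := hscaled
    _ = _ := by rw [hhom]; field_simp

lemma ENNReal.sq_lintegral_le_of_sq_le_mul {X : Type*} [MeasurableSpace X] {μ : Measure X}
    {f g h : X → ℝ≥0∞} (hg : AEMeasurable g μ) (hh : AEMeasurable h μ)
    (hfgh : ∀ᵐ x ∂μ, f x ^ 2 ≤ g x * h x) :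
    (∫⁻ x, f x ∂μ) ^ 2 ≤ (∫⁻ x, g x ∂μ) * ∫⁻ x, h x ∂μ := by
  have hsqrt (a : ℝ≥0∞) : (a ^ (1 / 2 : ℝ)) ^ 2 = a := by
    rw [← ENNReal.rpow_natCast, ← ENNReal.rpow_mul]; norm_num
  have hf : ∀ᵐ x ∂μ, f x ≤ g x ^ (1 / 2 : ℝ) * h x ^ (1 / 2 : ℝ) := by
    filter_upwards [hfgh] with x hx
    calc f x = (f x ^ 2) ^ (1 / 2 : ℝ) := by
          rw [← ENNReal.rpow_natCast, ← ENNReal.rpow_mul]; norm_num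
      _ ≤ (g x * h x) ^ (1 / 2 : ℝ) := by gcongr
      _ = _ := ENNReal.mul_rpow_of_nonneg _ _ (by norm_num)
  have hCS := ENNReal.lintegral_mul_le_Lp_mul_Lq μ Real.HolderConjugate.two_two
    (hg.pow_const (1 / 2 : ℝ)) (hh.pow_const (1 / 2 : ℝ))
  simp only [Pi.mul_apply, ENNReal.rpow_two, hsqrt] at hCS
  calc (∫⁻ x, f x ∂μ) ^ 2
      ≤ ((∫⁻ x, g x ∂μ) ^ (1 / 2 : ℝ) * (∫⁻ x, h x ∂μ) ^ (1 / 2 : ℝ)) ^ 2 := by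
        gcongr
        exact (lintegral_mono_ae hf).trans hCS
    _ = (∫⁻ x, g x ∂μ) * ∫⁻ x, h x ∂μ := by
        rw [mul_pow, hsqrt, hsqrt]

lemma ENNReal.sq_tsub_add_tsub_le {α : ℝ} (hα0 : 0 < α) (hα1 : α < 1) {x y : ℝ≥0∞}
    (hx : x ≠ ∞) (hy : y ≠ ∞) :
    ((x - y) + (y - x)) ^ 2 ≤
      (ENNReal.ofReal ((4 - 2 * α) / 3) * x + ENNReal.ofReal ((2 + 2 * α) / 3) * y) *
      (ENNReal.ofReal (α * (1 - α))⁻¹ *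
        (ENNReal.ofReal α * x + ENNReal.ofReal (1 - α) * y - x ^ α * y ^ (1 - α))) := by
  obtain ⟨x, hx0, rfl⟩ : ∃ r, 0 ≤ r ∧ ENNReal.ofReal r = x :=
    ⟨x.toReal, ENNReal.toReal_nonneg, ENNReal.ofReal_toReal hx⟩
  obtain ⟨y, hy0, rfl⟩ : ∃ r, 0 ≤ r ∧ ENNReal.ofReal r = y :=
    ⟨y.toReal, ENNReal.toReal_nonneg, ENNReal.ofReal_toReal hy⟩
  have hdist : (ENNReal.ofReal x - ENNReal.ofReal y) + (ENNReal.ofReal y - ENNReal.ofReal x) =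
      ENNReal.ofReal |x - y| := by
    rcases le_total x y with hxy | hxy
    · rw [tsub_eq_zero_of_le (ENNReal.ofReal_le_ofReal hxy), zero_add, ← ENNReal.ofReal_sub _ hx0,
        abs_sub_comm, abs_of_nonneg (sub_nonneg.2 hxy)]
    · rw [tsub_eq_zero_of_le (ENNReal.ofReal_le_ofReal hxy), add_zero, ← ENNReal.ofReal_sub _ hy0,
        abs_of_nonneg (sub_nonneg.2 hxy)]
  have h1α : 0 < 1 - α := by linarith
  have hgm : 0 ≤ x ^ α * y ^ (1 - α) := by positivity
  have hw : ENNReal.ofReal ((4 - 2 * α) / 3 * x + (2 + 2 * α) / 3 * y) =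
      ENNReal.ofReal ((4 - 2 * α) / 3) * ENNReal.ofReal x +
        ENNReal.ofReal ((2 + 2 * α) / 3) * ENNReal.ofReal y := by
    rw [ENNReal.ofReal_add (mul_nonneg (by linarith) hx0) (mul_nonneg (by linarith) hy0),
      ENNReal.ofReal_mul (by linarith), ENNReal.ofReal_mul (by linarith)]
  have hu : ENNReal.ofReal (α * x + (1 - α) * y - x ^ α * y ^ (1 - α)) =
      ENNReal.ofReal α * ENNReal.ofReal x + ENNReal.ofReal (1 - α) * ENNReal.ofReal y -
        ENNReal.ofReal x ^ α * ENNReal.ofReal y ^ (1 - α) := by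
    rw [ENNReal.ofReal_sub _ hgm,
      ENNReal.ofReal_add (mul_nonneg hα0.le hx0) (mul_nonneg h1α.le hy0),
      ENNReal.ofReal_mul hα0.le, ENNReal.ofReal_mul h1α.le, ENNReal.ofReal_mul (by positivity),
      ENNReal.ofReal_rpow_of_nonneg hx0 hα0.le, ENNReal.ofReal_rpow_of_nonneg hy0 h1α.le]
  have hα : 0 < α * (1 - α) := _root_.mul_pos hα0 h1α
  rw [hdist, ← hw, ← hu, ← ENNReal.ofReal_mul (inv_nonneg.2 hα.le),
    ← ENNReal.ofReal_mul (add_nonneg (mul_nonneg (by linarith) hx0) (mul_nonneg (by linarith) hy0)),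
    ← ENNReal.ofReal_pow (abs_nonneg _)]
  refine ENNReal.ofReal_le_ofReal ?_
  rw [sq_abs, mul_left_comm, ← div_eq_inv_mul, le_div_iff₀ hα, mul_comm]
  exact Real.mul_sq_sub_le_mul_sub_rpow_mul_rpow hα0 hα1 hx0 hy0

lemma ENNReal.rpow_mul_rpow_le_add {α : ℝ} (hα0 : 0 ≤ α) (hα1 : α ≤ 1) {x y : ℝ≥0∞}
    (hx : x ≠ ∞) (hy : y ≠ ∞) :
    x ^ α * y ^ (1 - α) ≤ ENNReal.ofReal α * x + ENNReal.ofReal (1 - α) * y := by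
  lift x to ℝ≥0 using hx
  lift y to ℝ≥0 using hy
  have h := NNReal.geom_mean_le_arith_mean2_weighted α.toNNReal (1 - α).toNNReal x y
    (by rw [← Real.toNNReal_add hα0 (by linarith)]; simp)
  rw [Real.coe_toNNReal _ hα0, Real.coe_toNNReal _ (by linarith)] at h
  rw [← ENNReal.coe_rpow_of_nonneg _ hα0, ← ENNReal.coe_rpow_of_nonneg _ (by linarith)]
  exact (ENNReal.coe_le_coe.2 h).trans_eq (by push_cast; rfl)

lemma mul_sq_toReal_lintegral_le_one_sub {X : Type*} [MeasurableSpace X] (μ : Measure X)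
    {p q : X → ℝ≥0∞} (hp : Measurable p) (hq : Measurable q)
    (hp1 : ∫⁻ x, p x ∂μ = 1) (hq1 : ∫⁻ x, q x ∂μ = 1) {α : ℝ} (hα0 : 0 < α) (hα1 : α < 1) :
    α * (1 - α) / 2 * (∫⁻ x, (p x - q x) + (q x - p x) ∂μ).toReal ^ 2 ≤
      1 - (∫⁻ x, p x ^ α * q x ^ (1 - α) ∂μ).toReal := by
  have h1α : 0 < 1 - α := by linarith
  have hα : 0 < α * (1 - α) := mul_pos hα0 h1α
  have hfin : ∀ᵐ x ∂μ, p x ≠ ∞ ∧ q x ≠ ∞ := by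
    filter_upwards [ae_lt_top hp (by simp [hp1]), ae_lt_top hq (by simp [hq1])] with x hpx hqx
    exact ⟨hpx.ne, hqx.ne⟩
  have hmix {a b : ℝ} (ha : 0 ≤ a) (hb : 0 ≤ b) :
      ∫⁻ x, ENNReal.ofReal a * p x + ENNReal.ofReal b * q x ∂μ = ENNReal.ofReal (a + b) := by
    rw [lintegral_add_left (hp.const_mul _), lintegral_const_mul _ hp, lintegral_const_mul _ hq,
      hp1, hq1, mul_one, mul_one, ENNReal.ofReal_add ha hb]
  have hm : ∫⁻ x, ENNReal.ofReal α * p x + ENNReal.ofReal (1 - α) * q x ∂μ = 1 := by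
    rw [hmix hα0.le h1α.le]; simp
  have hw : ∫⁻ x, ENNReal.ofReal ((4 - 2 * α) / 3) * p x +
      ENNReal.ofReal ((2 + 2 * α) / 3) * q x ∂μ = 2 := by
    rw [hmix (by linarith) (by linarith)]; ring_nf; simp
  have hg : Measurable fun x ↦ p x ^ α * q x ^ (1 - α) := by fun_prop
  have hgm : ∀ᵐ x ∂μ, p x ^ α * q x ^ (1 - α) ≤
      ENNReal.ofReal α * p x + ENNReal.ofReal (1 - α) * q x :=
    hfin.mono fun x hx ↦ ENNReal.rpow_mul_rpow_le_add hα0.le hα1.le hx.1 hx.2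
  set H := ∫⁻ x, p x ^ α * q x ^ (1 - α) ∂μ
  have hH1 : H ≤ 1 := (lintegral_mono_ae hgm).trans_eq hm
  have hCS := ENNReal.sq_lintegral_le_of_sq_le_mul (by fun_prop) (by fun_prop)
    (hfin.mono fun x hx ↦ ENNReal.sq_tsub_add_tsub_le hα0 hα1 hx.1 hx.2)
  rw [hw, lintegral_const_mul' _ _ ENNReal.ofReal_ne_top,
    lintegral_sub hg (ne_top_of_le_ne_top ENNReal.one_ne_top hH1) hgm, hm] at hCS
  have hV := ENNReal.toReal_mono (by finiteness) hCS
  rw [ENNReal.toReal_pow, ENNReal.toReal_mul, ENNReal.toReal_mul,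
    ENNReal.toReal_sub_of_le hH1 ENNReal.one_ne_top, ENNReal.toReal_ofReal (by positivity),
    ENNReal.toReal_ofNat, ENNReal.toReal_one] at hV
  calc α * (1 - α) / 2 * _ ≤ α * (1 - α) / 2 * (2 * ((α * (1 - α))⁻¹ * (1 - H.toReal))) := by
        gcongr
    _ = 1 - H.toReal := by field_simp

lemma hellingerInt_eq_lintegral_rnDeriv {X : Type*} [MeasurableSpace X] {P Q μ : Measure X}
    [SigmaFinite P] [SigmaFinite Q] [SigmaFinite μ] (hPμ : P ≪ μ) (hQμ : Q ≪ μ) {α : ℝ}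
    (hα0 : 0 ≤ α) (hα1 : α ≤ 1) :
    hellingerInt α P Q = ∫⁻ x, P.rnDeriv μ x ^ α * Q.rnDeriv μ x ^ (1 - α) ∂μ := by
  have hP : P ≪ P + Q := Measure.AbsolutelyContinuous.rfl.add_right Q
  have hQ : Q ≪ P + Q := add_comm Q P ▸ Measure.AbsolutelyContinuous.rfl.add_right P
  rw [hellingerInt, ← lintegral_rnDeriv_mul (hPμ.add_left hQμ) (by fun_prop)]
  refine lintegral_congr_ae ?_
  filter_upwards [Measure.rnDeriv_mul_rnDeriv (κ := μ) hP,
    Measure.rnDeriv_mul_rnDeriv (κ := μ) hQ] with x hPx hQx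
  rw [← hPx, ← hQx, Pi.mul_apply, Pi.mul_apply, ENNReal.mul_rpow_of_nonneg _ _ hα0,
    ENNReal.mul_rpow_of_nonneg _ _ (sub_nonneg.2 hα1), mul_mul_mul_comm,
    ← ENNReal.rpow_add_of_nonneg _ _ hα0 (sub_nonneg.2 hα1), add_sub_cancel, ENNReal.rpow_one,
    mul_comm]

lemma hellingerInt_withDensity {X : Type*} [MeasurableSpace X] (μ : Measure X) [SigmaFinite μ]
    {p q : X → ℝ≥0∞} (hp : Measurable p) (hq : Measurable q) [SigmaFinite (μ.withDensity p)]
    [SigmaFinite (μ.withDensity q)] {α : ℝ} (hα0 : 0 ≤ α) (hα1 : α ≤ 1) :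
    hellingerInt α (μ.withDensity p) (μ.withDensity q) = ∫⁻ x, p x ^ α * q x ^ (1 - α) ∂μ := by
  rw [hellingerInt_eq_lintegral_rnDeriv (withDensity_absolutelyContinuous μ p)
    (withDensity_absolutelyContinuous μ q) hα0 hα1]
  refine lintegral_congr_ae ?_
  filter_upwards [Measure.rnDeriv_withDensity μ hp, Measure.rnDeriv_withDensity μ hq] with x hpx hqx
  rw [hpx, hqx]

lemma one_sub_toReal_hellingerInt_div_le_renyiSimple {X : Type*} [MeasurableSpace X]
    {P Q : Measure X} {α : ℝ} (hα1 : α < 1) (hH : hellingerInt α P Q ≠ ∞) :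
    (((1 - (hellingerInt α P Q).toReal) / (1 - α) : ℝ) : EReal) ≤ renyiSimple α P Q := by
  rw [renyiSimple]
  rcases eq_or_ne (hellingerInt α P Q) 0 with h0 | h0
  · rw [h0, ENNReal.log_zero, EReal.coe_mul_bot_of_neg (inv_lt_zero.2 (by linarith))]
    exact le_top
  rw [ENNReal.log_pos_real h0 hH, ← EReal.coe_mul, EReal.coe_le_coe_iff]
  have hlog := Real.log_le_sub_one_of_pos (ENNReal.toReal_pos h0 hH)
  calc (1 - (hellingerInt α P Q).toReal) / (1 - α)
      ≤ -Real.log (hellingerInt α P Q).toReal / (1 - α) := by gcongr; linarith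
    _ = (α - 1)⁻¹ * Real.log (hellingerInt α P Q).toReal := by
        rw [div_eq_inv_mul, ← neg_sub α 1, inv_neg, neg_mul_neg]

lemma renyiDiv_ofReal_of_lt_one {X : Type*} [MeasurableSpace X] (P Q : Measure X) {α : ℝ}
    (hα0 : 0 < α) (hα1 : α < 1) : renyiDiv (ENNReal.ofReal α) P Q = renyiSimple α P Q := by
  rw [renyiDiv, if_neg (ENNReal.ofReal_pos.2 hα0).ne', if_neg (ENNReal.ofReal_lt_one.2 hα1).ne,
    if_neg ENNReal.ofReal_ne_top, ENNReal.toReal_ofReal hα0.le]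

lemma renyiDiv_one {X : Type*} [MeasurableSpace X] (P Q : Measure X) :
    renyiDiv 1 P Q = limsup (fun a : ℝ ↦ renyiSimple a P Q) (𝓝[<] 1) := by
  rw [renyiDiv, if_neg one_ne_zero, if_pos rfl]

lemma renyiSimple_pinsker {X : Type*} [MeasurableSpace X] (μ : Measure X) [SigmaFinite μ]
    {p q : X → ℝ≥0∞} (hp : Measurable p) (hq : Measurable q)
    [IsProbabilityMeasure (μ.withDensity p)] [IsProbabilityMeasure (μ.withDensity q)]
    {α : ℝ} (hα0 : 0 < α) (hα1 : α < 1) :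
    ((α / 2 * (∫⁻ x, ((p x - q x) + (q x - p x)) ∂μ).toReal ^ 2 : ℝ) : EReal) ≤
      renyiSimple α (μ.withDensity p) (μ.withDensity q) := by
  have hp1 : ∫⁻ x, p x ∂μ = 1 := by
    rw [← setLIntegral_univ, ← withDensity_apply _ MeasurableSet.univ, measure_univ]
  have hq1 : ∫⁻ x, q x ∂μ = 1 := by
    rw [← setLIntegral_univ, ← withDensity_apply _ MeasurableSet.univ, measure_univ]
  have hH := hellingerInt_withDensity μ hp hq hα0.le hα1.le
  have hH1 : hellingerInt α (μ.withDensity p) (μ.withDensity q) ≤ 1 := hH ▸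
    (ENNReal.lintegral_mul_norm_pow_le hp.aemeasurable hq.aemeasurable hα0.le (by linarith)
      (by ring)).trans_eq (by simp [hp1, hq1])
  refine le_trans ?_ (one_sub_toReal_hellingerInt_div_le_renyiSimple hα1
    (ne_top_of_le_ne_top ENNReal.one_ne_top hH1))
  rw [EReal.coe_le_coe_iff, le_div_iff₀ (by linarith), hH]
  calc _ = α * (1 - α) / 2 * (∫⁻ x, ((p x - q x) + (q x - p x)) ∂μ).toReal ^ 2 := by ring
    _ ≤ _ := mul_sq_toReal_lintegral_le_one_sub μ hp hq hp1 hq1 hα0 hα1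

/-- **Generalized Pinsker inequality.** For every order `α ∈ (0,1]` and probability
measures `P, Q` with densities `p, q` with respect to a common σ-finite measure `μ`,
`(α/2) V(P,Q)² ≤ D_α(P‖Q)`, where `V(P,Q) = ∫ |p - q| dμ` is the total variation
distance (expressed in `ℝ≥0∞` via truncated subtraction as `(p-q) + (q-p)`). -/
theorem renyiDiv_pinsker
    {X : Type*} [MeasurableSpace X] (P Q : Measure X)
    [IsProbabilityMeasure P] [IsProbabilityMeasure Q]
    (μ : Measure X) [SigmaFinite μ] (p q : X → ℝ≥0∞)
    (hp : Measurable p) (hq : Measurable q)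
    (hP : P = μ.withDensity p) (hQ : Q = μ.withDensity q)
    (α : ℝ) (hα0 : 0 < α) (hα1 : α ≤ 1) :
    ((α / 2 * (∫⁻ x, ((p x - q x) + (q x - p x)) ∂μ).toReal ^ 2 : ℝ) : EReal)
      ≤ renyiDiv (ENNReal.ofReal α) P Q := by
  subst hP hQ
  rcases hα1.lt_or_eq with hα1 | rfl
  · rw [renyiDiv_ofReal_of_lt_one _ _ hα0 hα1]
    exact renyiSimple_pinsker μ hp hq hα0 hα1
  set V := (∫⁻ x, ((p x - q x) + (q x - p x)) ∂μ).toReal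
  have hlim : Tendsto (fun a : ℝ ↦ ((a / 2 * V ^ 2 : ℝ) : EReal)) (𝓝[<] 1)
      (𝓝 ((1 / 2 * V ^ 2 : ℝ) : EReal)) :=
    (continuous_coe_real_ereal.comp (by fun_prop)).continuousAt.tendsto.mono_left
      nhdsWithin_le_nhds
  rw [ENNReal.ofReal_one, renyiDiv_one, ← hlim.limsup_eq]
  refine limsup_le_limsup ?_
  filter_upwards [Ioo_mem_nhdsLT one_pos] with a ha using renyiSimple_pinsker μ hp hq ha.1 ha.2
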